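/- There are only finitely many positive integers N such that (p-1)/12 · psi(N) + 2^{omega(N)} <= 6(p^2+1) holds for all primes p not dividing N; in particular no N > 335 satisfies this condition, where psi(N) = N · prod_{q | N prime}(1 + 1/q) and omega(N) is the number of distinct prime divisors of N. -/
import Mathlib

open scoped BigOperators

/-- `ψ(N) = N · ∏_{q ∣ N prime} (1 + 1/q)`. -/
noncomputable def psiQ (N : ℕ) : ℚ :=
  (N : ℚ) * ∏ q ∈ N.primeFactors, (1 + 1 / (q : ℚ))

/-- `ω(N)`, the number of distinct prime divisors of `N`. -/
def omega (N : ℕ) : ℕ := N.primeFactors.card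

/-- The condition `L_p(N) := (p-1)/12 · ψ(N) + 2^{ω(N)} ≤ 6 (p² + 1)` for all primes
`p ∤ N`. -/
def OggCond (N : ℕ) : Prop :=
  ∀ p : ℕ, p.Prime → ¬ p ∣ N →
    ((p : ℚ) - 1) / 12 * psiQ N + 2 ^ omega N ≤ 6 * ((p : ℚ) ^ 2 + 1)

lemma psi_prod_le (N : ℕ) (s : Finset ℕ) (hs : s ⊆ N.primeFactors) :
    (N : ℚ) * ∏ q ∈ s, (1 + 1 / (q : ℚ)) ≤ psiQ N := by
  unfold psiQ
  have h1 : ∏ q ∈ s, (1 + 1 / (q : ℚ)) ≤ ∏ q ∈ N.primeFactors, (1 + 1 / (q : ℚ)) := by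
    rw [← Finset.prod_sdiff hs]
    have h2 : (1:ℚ) ≤ ∏ q ∈ N.primeFactors \ s, (1 + 1 / (q : ℚ)) := by
      have := Finset.prod_le_prod
        (f := fun _ : ℕ => (1:ℚ)) (g := fun q : ℕ => 1 + 1 / (q:ℚ))
        (s := N.primeFactors \ s)
        (by intros; norm_num)
        (by intro i _
            have : (0:ℚ) ≤ 1 / (i:ℚ) := by positivity
            linarith)
      simpa using this
    have h3 : (0:ℚ) ≤ ∏ q ∈ s, (1 + 1 / (q : ℚ)) := by
      apply Finset.prod_nonneg
      intro i _
      positivity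
    nlinarith
  have h0 : (0:ℚ) ≤ N := Nat.cast_nonneg N
  nlinarith

lemma psi_ge (N : ℕ) : (N : ℚ) ≤ psiQ N := by
  have := psi_prod_le N ∅ (by simp)
  simpa using this

lemma psi_ge_succ (N : ℕ) (hN : 2 ≤ N) : (N : ℚ) + 1 ≤ psiQ N := by
  have hq := Nat.minFac_prime (by omega : N ≠ 1)
  have hmem : N.minFac ∈ N.primeFactors :=
    Nat.mem_primeFactors.mpr ⟨hq, N.minFac_dvd, by omega⟩
  have h := psi_prod_le N {N.minFac} (Finset.singleton_subset_iff.mpr hmem)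
  rw [Finset.prod_singleton] at h
  have hle : (N.minFac : ℚ) ≤ N := by exact_mod_cast Nat.minFac_le (by omega)
  have hpos : (0:ℚ) < N.minFac := by exact_mod_cast hq.pos
  have h1 : (1:ℚ) ≤ (N:ℚ) / N.minFac := (one_le_div hpos).mpr hle
  have hexp : (N:ℚ) * (1 + 1 / N.minFac) = N + N / N.minFac := by ring
  rw [hexp] at h
  linarith

lemma two_pow_omega_ge (N : ℕ) (hN : 2 ≤ N) : (2:ℚ) ≤ 2 ^ omega N := by
  have h1 : 1 ≤ omega N :=
    Finset.card_pos.mpr (Nat.nonempty_primeFactors.mpr hN)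
  calc (2:ℚ) = 2 ^ 1 := by norm_num
  _ ≤ 2 ^ omega N := pow_le_pow_right₀ (by norm_num) h1

lemma ogg_case2 (N : ℕ) (hN : 337 ≤ N) (hc : OggCond N) (h2 : ¬ 2 ∣ N) : False := by
  have hcond := hc 2 (by norm_num) h2
  have hNq : (337:ℚ) ≤ (N:ℚ) := by exact_mod_cast hN
  have hpsi := psi_ge_succ N (by linarith)
  have hpow : (2:ℚ) ≤ 2 ^ omega N := two_pow_omega_ge N (by linarith)
  push_cast at hcond
  linarith

lemma ogg_case3 (N : ℕ) (hN : 336 ≤ N) (hc : OggCond N)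
    (h2 : 2 ∣ N) (h3 : ¬ 3 ∣ N) : False := by
  have hcond := hc 3 (by norm_num) h3
  have hNq : (336:ℚ) ≤ (N:ℚ) := by exact_mod_cast hN
  have hN0 : N ≠ 0 := fun h => by rw [h] at hN; exact absurd hN (by norm_num)
  have hpow : (2:ℚ) ≤ 2 ^ omega N :=
    two_pow_omega_ge N (Nat.le_of_dvd (Nat.pos_of_ne_zero hN0) h2)
  have hsub : ({2} : Finset ℕ) ⊆ N.primeFactors :=
    Finset.singleton_subset_iff.mpr (Nat.mem_primeFactors.mpr ⟨by norm_num, h2, hN0⟩)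
  have hpsi := psi_prod_le N {2} hsub
  have hprod : ∏ q ∈ ({2} : Finset ℕ), (1 + 1 / (q : ℚ)) = 3 / 2 := by
    norm_num [Finset.prod_singleton]
  rw [hprod] at hpsi
  push_cast at hcond
  linarith

lemma ogg_case5 (N : ℕ) (hN : 336 ≤ N) (hc : OggCond N)
    (h2 : 2 ∣ N) (h3 : 3 ∣ N) (h5 : ¬ 5 ∣ N) : False := by
  have hcond := hc 5 (by norm_num) h5
  have hNq : (336:ℚ) ≤ (N:ℚ) := by exact_mod_cast hN
  have hN0 : N ≠ 0 := fun h => by rw [h] at hN; exact absurd hN (by norm_num)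
  have hpow : (2:ℚ) ≤ 2 ^ omega N :=
    two_pow_omega_ge N (Nat.le_of_dvd (Nat.pos_of_ne_zero hN0) h2)
  have hsub : ({2, 3} : Finset ℕ) ⊆ N.primeFactors := by
    intro q hq
    fin_cases hq
    · exact Nat.mem_primeFactors.mpr ⟨by norm_num, h2, hN0⟩
    · exact Nat.mem_primeFactors.mpr ⟨by norm_num, h3, hN0⟩
  have hpsi := psi_prod_le N {2, 3} hsub
  have hprod : ∏ q ∈ ({2, 3} : Finset ℕ), (1 + 1 / (q : ℚ)) = 2 := by
    norm_num [Finset.prod_insert, Finset.prod_singleton]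
  rw [hprod] at hpsi
  push_cast at hcond
  linarith

lemma ogg_case7 (N : ℕ) (hN : 336 ≤ N) (hc : OggCond N)
    (h2 : 2 ∣ N) (h3 : 3 ∣ N) (h5 : 5 ∣ N) (h7 : ¬ 7 ∣ N) : False := by
  have hcond := hc 7 (by norm_num) h7
  have hNq : (336:ℚ) ≤ (N:ℚ) := by exact_mod_cast hN
  have hN0 : N ≠ 0 := fun h => by rw [h] at hN; exact absurd hN (by norm_num)
  have hpow : (2:ℚ) ≤ 2 ^ omega N :=
    two_pow_omega_ge N (Nat.le_of_dvd (Nat.pos_of_ne_zero hN0) h2)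
  have hsub : ({2, 3, 5} : Finset ℕ) ⊆ N.primeFactors := by
    intro q hq
    fin_cases hq
    · exact Nat.mem_primeFactors.mpr ⟨by norm_num, h2, hN0⟩
    · exact Nat.mem_primeFactors.mpr ⟨by norm_num, h3, hN0⟩
    · exact Nat.mem_primeFactors.mpr ⟨by norm_num, h5, hN0⟩
  have hpsi := psi_prod_le N {2, 3, 5} hsub
  have hprod : ∏ q ∈ ({2, 3, 5} : Finset ℕ), (1 + 1 / (q : ℚ)) = 12 / 5 := by
    norm_num [Finset.prod_insert, Finset.prod_singleton]
  rw [hprod] at hpsi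
  push_cast at hcond
  linarith

lemma ogg_case11 (N : ℕ) (hN : 420 ≤ N) (hc : OggCond N)
    (h2 : 2 ∣ N) (h3 : 3 ∣ N) (h5 : 5 ∣ N) (h7 : 7 ∣ N) (h11 : ¬ 11 ∣ N) : False := by
  have hcond := hc 11 (by norm_num) h11
  have hNq : (420:ℚ) ≤ (N:ℚ) := by exact_mod_cast hN
  have hN0 : N ≠ 0 := fun h => by rw [h] at hN; exact absurd hN (by norm_num)
  have hpow : (2:ℚ) ≤ 2 ^ omega N :=
    two_pow_omega_ge N (Nat.le_of_dvd (Nat.pos_of_ne_zero hN0) h2)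
  have hsub : ({2, 3, 5, 7} : Finset ℕ) ⊆ N.primeFactors := by
    intro q hq
    fin_cases hq
    · exact Nat.mem_primeFactors.mpr ⟨by norm_num, h2, hN0⟩
    · exact Nat.mem_primeFactors.mpr ⟨by norm_num, h3, hN0⟩
    · exact Nat.mem_primeFactors.mpr ⟨by norm_num, h5, hN0⟩
    · exact Nat.mem_primeFactors.mpr ⟨by norm_num, h7, hN0⟩
  have hpsi := psi_prod_le N {2, 3, 5, 7} hsub
  have hprod : ∏ q ∈ ({2, 3, 5, 7} : Finset ℕ), (1 + 1 / (q : ℚ)) = 96 / 35 := by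
    norm_num [Finset.prod_insert, Finset.prod_singleton]
  rw [hprod] at hpsi
  push_cast at hcond
  linarith

lemma ogg_case13 (N : ℕ) (hN : 2310 ≤ N) (hc : OggCond N) (h13 : ¬ 13 ∣ N) : False := by
  have hcond := hc 13 (by norm_num) h13
  have hNq : (2310:ℚ) ≤ (N:ℚ) := by exact_mod_cast hN
  have hpow : (1:ℚ) ≤ 2 ^ omega N := one_le_pow₀ (by norm_num)
  have hpsi := psi_ge N
  push_cast at hcond
  linarith

lemma ogg_caseBig (N : ℕ) (hN : 336 ≤ N) (hc : OggCond N) (h30030 : 30030 ∣ N) :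
    False := by
  have hNpos : 0 < N := lt_of_lt_of_le (by norm_num) hN
  have hex : ∃ p : ℕ, p.Prime ∧ ¬ p ∣ N := by
    obtain ⟨p, hp1, hp2⟩ := Nat.exists_infinite_primes (N + 1)
    refine ⟨p, hp2, fun hd => ?_⟩
    have := Nat.le_of_dvd hNpos hd
    linarith
  obtain ⟨p, hpp, hpnd, hmin⟩ :
      ∃ p : ℕ, p.Prime ∧ ¬ p ∣ N ∧ ∀ m : ℕ, m < p → m.Prime → m ∣ N := by
    refine ⟨Nat.find hex, (Nat.find_spec hex).1, (Nat.find_spec hex).2, ?_⟩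
    intro m hm hmp
    by_contra hd
    exact Nat.find_min hex hm ⟨hmp, hd⟩
  have hp17 : 17 ≤ p := by
    rcases Nat.lt_or_ge p 17 with h | h
    · exfalso
      have hdd : p ∣ 30030 := by
        interval_cases p <;> revert hpp <;> decide
      exact hpnd (hdd.trans h30030)
    · exact h
  have hcond := hc p hpp hpnd
  have hpsi := psi_ge N
  have hpow : (1:ℚ) ≤ 2 ^ omega N := one_le_pow₀ (by norm_num)
  have hp17q : (17:ℚ) ≤ (p:ℚ) := by exact_mod_cast hp17
  have hkey : ((p:ℚ) - 1) * N ≤ 72 * (p:ℚ) ^ 2 + 60 := by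
    have hmul : ((p:ℚ) - 1) / 12 * (N:ℚ) ≤ ((p:ℚ) - 1) / 12 * psiQ N := by
      apply mul_le_mul_of_nonneg_left hpsi
      linarith
    linarith
  have hN30030 : (30030:ℚ) ≤ (N:ℚ) := by
    exact_mod_cast Nat.le_of_dvd hNpos h30030
  by_cases hple : p ≤ 415
  · have hpleq : (p:ℚ) ≤ 415 := by exact_mod_cast hple
    nlinarith [mul_nonneg (sub_nonneg.mpr hp17q) (sub_nonneg.mpr hpleq),
      mul_le_mul_of_nonneg_left hN30030 (by linarith : (0:ℚ) ≤ (p:ℚ) - 1)]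
  · push_neg at hple
    obtain ⟨q, hq, hq1, hq2⟩ :=
      Nat.exists_prime_lt_and_le_two_mul ((p - 1) / 2) (by omega)
    have hqlt : q < p := by omega
    have hqN : q ∣ N := hmin q hqlt hq
    have hq208 : 208 ≤ q := by omega
    have hqnd : ¬ q ∣ 30030 := by
      intro hd
      have h30 : (30030:ℕ) = 2 * 3 * 5 * 7 * 11 * 13 := by norm_num
      rw [h30] at hd
      rcases (Nat.Prime.dvd_mul hq).mp hd with h | h
      · rcases (Nat.Prime.dvd_mul hq).mp h with h | h
        · rcases (Nat.Prime.dvd_mul hq).mp h with h | h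
          · rcases (Nat.Prime.dvd_mul hq).mp h with h | h
            · rcases (Nat.Prime.dvd_mul hq).mp h with h | h
              · have := Nat.le_of_dvd (by norm_num) h; omega
              · have := Nat.le_of_dvd (by norm_num) h; omega
            · have := Nat.le_of_dvd (by norm_num) h; omega
          · have := Nat.le_of_dvd (by norm_num) h; omega
        · have := Nat.le_of_dvd (by norm_num) h; omega
      · have := Nat.le_of_dvd (by norm_num) h; omega
    have hcop : Nat.Coprime q 30030 := (Nat.Prime.coprime_iff_not_dvd hq).mpr hqnd
    have hmul : q * 30030 ∣ N := Nat.Coprime.mul_dvd_of_dvd_of_dvd hcop hqN h30030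
    have hNge : 15015 * p ≤ N := by
      have hle1 : q * 30030 ≤ N := Nat.le_of_dvd hNpos hmul
      have h2q : p ≤ 2 * q := by omega
      nlinarith
    have hNgeq : (15015:ℚ) * (p:ℚ) ≤ (N:ℚ) := by exact_mod_cast hNge
    have hp416 : (416:ℚ) ≤ (p:ℚ) := by exact_mod_cast hple
    nlinarith [mul_le_mul_of_nonneg_left hNgeq (by linarith : (0:ℚ) ≤ (p:ℚ) - 1)]

lemma ogg_none (N : ℕ) (hN : 335 < N) : ¬ OggCond N := by
  intro hc
  have hN336 : 336 ≤ N := hN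
  have hNpos : 0 < N := lt_of_lt_of_le (by norm_num) hN336
  by_cases h2 : 2 ∣ N
  · by_cases h3 : 3 ∣ N
    · by_cases h5 : 5 ∣ N
      · by_cases h7 : 7 ∣ N
        · have h6 : 6 ∣ N := Nat.Coprime.mul_dvd_of_dvd_of_dvd (by norm_num) h2 h3
          have h30 : 30 ∣ N := Nat.Coprime.mul_dvd_of_dvd_of_dvd (by norm_num) h6 h5
          have h210 : 210 ∣ N := Nat.Coprime.mul_dvd_of_dvd_of_dvd (by norm_num) h30 h7
          by_cases h11 : 11 ∣ N
          · have h2310 : 2310 ∣ N :=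
              Nat.Coprime.mul_dvd_of_dvd_of_dvd (by norm_num) h210 h11
            by_cases h13 : 13 ∣ N
            · exact ogg_caseBig N hN336 hc
                (Nat.Coprime.mul_dvd_of_dvd_of_dvd (by norm_num) h2310 h13)
            · exact ogg_case13 N (Nat.le_of_dvd hNpos h2310) hc h13
          · have hN420 : 420 ≤ N := by
              obtain ⟨k, hk⟩ := h210
              rcases Nat.lt_or_ge k 2 with hk2 | hk2
              · interval_cases k <;> simp_all <;> linarith
              · rw [hk]; nlinarith
            exact ogg_case11 N hN420 hc h2 h3 h5 h7 h11
        · exact ogg_case7 N hN336 hc h2 h3 h5 h7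
      · exact ogg_case5 N hN336 hc h2 h3 h5
    · exact ogg_case3 N hN336 hc h2 h3
  · have hN337 : 337 ≤ N := by
      rcases Nat.lt_or_ge N 337 with h | h
      · exfalso; apply h2; interval_cases N <;> norm_num
      · exact h
    exact ogg_case2 N hN337 hc h2

/-- Only finitely many positive integers `N` satisfy
`(p-1)/12 · ψ(N) + 2^{ω(N)} ≤ 6 (p² + 1)` for all primes `p ∤ N`; in particular,
no `N > 335` satisfies this condition. -/
theorem stmt15 :
    {N : ℕ | 0 < N ∧ OggCond N}.Finite ∧ ∀ N : ℕ, 335 < N → ¬ OggCond N := by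
  refine ⟨?_, ogg_none⟩
  apply Set.Finite.subset (Set.finite_Icc 0 335)
  rintro N ⟨-, hc⟩
  simp only [Set.mem_Icc]
  refine ⟨Nat.zero_le N, ?_⟩
  by_contra h
  exact ogg_none N (by omega) hc
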